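/- Let G be a finite simple graph with no induced claw. Then for every vertex subset J with G|_J connected and every j ∈ J, the induced subgraph G|_{J \ {j}} has at most 2 connected components. -/
import Mathlib
open SimpleGraph
def clawGraph : SimpleGraph (Fin 4) := SimpleGraph.fromEdgeSet {s(0,1), s(0,2), s(0,3)}

lemma clawAdj (i k : Fin 4) : clawGraph.Adj i k ↔ (i = 0 ∨ k = 0) ∧ i ≠ k := by
  simp only [clawGraph, fromEdgeSet_adj, Set.mem_insert_iff, Set.mem_singleton_iff]
  constructor
  · rintro ⟨hm, hne⟩; refine ⟨?_, hne⟩; revert hm; revert hne; revert i k; decide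
  · rintro ⟨h0, hne⟩; refine ⟨?_, hne⟩; revert h0; revert hne; revert i k; decide

lemma claw_iso {V : Type*} (G : SimpleGraph V) {j a b c : V}
    (hja : G.Adj j a) (hjb : G.Adj j b) (hjc : G.Adj j c)
    (hab : ¬G.Adj a b) (hac : ¬G.Adj a c) (hbc : ¬G.Adj b c)
    (nab : a ≠ b) (nac : a ≠ c) (nbc : b ≠ c) :
    Nonempty (G.induce {j,a,b,c} ≃g clawGraph) := by
  letI : DecidableEq V := Classical.decEq V
  have nja : j ≠ a := hja.ne
  have njb : j ≠ b := hjb.ne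
  have njc : j ≠ c := hjc.ne
  have hba : ¬G.Adj b a := fun h => hab h.symm
  have hca : ¬G.Adj c a := fun h => hac h.symm
  have hcb : ¬G.Adj c b := fun h => hbc h.symm
  refine ⟨⟨⟨fun x => if x.1 = j then 0 else if x.1 = a then 1 else if x.1 = b then 2 else 3,
    fun i => ![⟨j, by simp⟩, ⟨a, by simp⟩, ⟨b, by simp⟩, ⟨c, by simp⟩] i, ?_, ?_⟩, ?_⟩⟩
  · rintro ⟨x, hx⟩
    rcases hx with rfl | rfl | rfl | rfl <;>
      simp [nja, nja.symm, njb, njb.symm, njc, njc.symm, nab, nab.symm, nac, nac.symm,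
        nbc, nbc.symm]
  · intro i
    fin_cases i <;>
      simp [nja, nja.symm, njb, njb.symm, njc, njc.symm, nab, nab.symm, nac, nac.symm,
        nbc, nbc.symm]
  · rintro ⟨x, hx⟩ ⟨y, hy⟩
    rcases hx with rfl | rfl | rfl | rfl <;> rcases hy with rfl | rfl | rfl | rfl <;>
      simp [clawAdj, comap_adj, Function.Embedding.coe_subtype,
        nja, nja.symm, njb, njb.symm, njc, njc.symm, nab, nab.symm, nac, nac.symm,
        nbc, nbc.symm, hja, hjb, hjc, hja.symm, hjb.symm, hjc.symm,
        hab, hba, hac, hca, hbc, hcb, G.irrefl]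

lemma reach_nbr {V : Type*} (G : SimpleGraph V) {J : Set V} {j : V} :
    ∀ (x y : ↥J), (G.induce J).Walk x y → y.1 = j → ∀ (hx : x.1 ≠ j),
    ∃ w, ∃ (hw : w ∈ J \ {j}), G.Adj w j ∧
      (G.induce (J \ {j})).Reachable ⟨x.1, ⟨x.2, hx⟩⟩ ⟨w, hw⟩ := by
  intro x y p
  induction p with
  | nil => intro hy hx; exact absurd hy hx
  | @cons u v y huv p ih =>
    intro hy hx
    by_cases hv : v.1 = j
    · refine ⟨u.1, ⟨u.2, hx⟩, ?_, Reachable.refl _⟩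
      have : G.Adj u.1 v.1 := huv
      rwa [hv] at this
    · obtain ⟨w, hw, hwj, hr⟩ := ih hy hv
      refine ⟨w, hw, hwj, Reachable.trans ?_ hr⟩
      exact Adj.reachable (by exact (huv : G.Adj u.1 v.1))

theorem stmt7 {V : Type*} [Fintype V] (G : SimpleGraph V)
    (h : ∀ I : Set V, ¬ Nonempty (G.induce I ≃g clawGraph)) :
    ∀ (J : Set V) (j : V), (G.induce J).Connected → j ∈ J →
      Nat.card ((G.induce (J \ {j})).ConnectedComponent) ≤ 2 := by
  intro J j hconn hjJ
  by_contra hcard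
  push_neg at hcard
  haveI : Fintype ((G.induce (J \ {j})).ConnectedComponent) := Fintype.ofFinite _
  rw [Nat.card_eq_fintype_card] at hcard
  obtain ⟨c1, c2, c3, h12, h13, h23⟩ := Fintype.two_lt_card_iff.mp hcard
  -- for each component, get a vertex adjacent to j
  have key : ∀ c : (G.induce (J \ {j})).ConnectedComponent,
      ∃ w, ∃ (hw : w ∈ J \ {j}), G.Adj w j ∧
        (G.induce (J \ {j})).connectedComponentMk ⟨w, hw⟩ = c := by
    intro c
    obtain ⟨v, rfl⟩ := c.exists_rep
    have hvne : v.1 ≠ j := v.2.2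
    obtain ⟨p⟩ := hconn.preconnected ⟨v.1, v.2.1⟩ ⟨j, hjJ⟩
    obtain ⟨w, hw, hwj, hr⟩ := reach_nbr G _ _ p rfl hvne
    refine ⟨w, hw, hwj, ?_⟩
    exact (ConnectedComponent.sound hr.symm)
  obtain ⟨a, ha, haj, hac1⟩ := key c1
  obtain ⟨b, hb, hbj, hbc2⟩ := key c2
  obtain ⟨c, hc, hcj, hcc3⟩ := key c3
  -- distinctness
  have nab : a ≠ b := by rintro rfl; exact h12 (by rw [← hac1, ← hbc2])
  have nac : a ≠ c := by rintro rfl; exact h13 (by rw [← hac1, ← hcc3])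
  have nbc : b ≠ c := by rintro rfl; exact h23 (by rw [← hbc2, ← hcc3])
  -- non-adjacency
  have hab : ¬G.Adj a b := by
    intro hadj
    refine h12 ?_
    rw [← hac1, ← hbc2]
    exact ConnectedComponent.sound (Adj.reachable (by exact hadj))
  have hac : ¬G.Adj a c := by
    intro hadj
    refine h13 ?_
    rw [← hac1, ← hcc3]
    exact ConnectedComponent.sound (Adj.reachable (by exact hadj))
  have hbc : ¬G.Adj b c := by
    intro hadj
    refine h23 ?_
    rw [← hbc2, ← hcc3]
    exact ConnectedComponent.sound (Adj.reachable (by exact hadj))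
  exact h {j, a, b, c} (claw_iso G haj.symm hbj.symm hcj.symm hab hac hbc nab nac nbc)
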